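/- Let N, n, m be positive integers, let ℓ₁, …, ℓₙ : ℝᴺ → ℝ and ℓ̂₁, …, ℓ̂ₘ : ℝᴺ → ℝ be twice continuously differentiable, and let R(θ) = (1/n) Σᵢ₌₁ⁿ ℓᵢ(θ). Suppose θ : ℝᵐ → ℝᴺ is differentiable at 0, satisfies ∇R(θ(δ)) + Σⱼ₌₁ᵐ δⱼ·∇ℓ̂ⱼ(θ(δ)) = 0 for all δ in a neighborhood of 0 in ℝᵐ, and H = ∇²R(θ(0)) is invertible. If L_test : ℝᴺ → ℝ is differentiable at θ̂ = θ(0), then the gradient at 0 of the map δ ↦ L_test(θ(δ)) has j-th component ⟨∇L_test(θ̂), −H⁻¹ ∇ℓ̂ⱼ(θ̂)⟩ for every j ∈ {1, …, m}. -/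

import Mathlib

/-!
Differentiating the stationarity condition `∇R(θ δ) + ∑ⱼ δⱼ • ∇ℓ̂ⱼ(θ δ) = 0` at `δ = 0` in the
direction `eⱼ` gives `H (Dθ eⱼ) + ∇ℓ̂ⱼ(θ̂) = 0`, i.e. `Dθ eⱼ = -H⁻¹ ∇ℓ̂ⱼ(θ̂)`. By the chain rule the
`j`-th partial derivative of `δ ↦ L_test(θ δ)` at `0` is `⟪∇L_test(θ̂), Dθ eⱼ⟫`.
-/

open RealInnerProductSpace InnerProductSpace Filter Topology

theorem ContDiff.differentiable_gradient {F : Type*} [NormedAddCommGroup F]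
    [InnerProductSpace ℝ F] [CompleteSpace F] {f : F → ℝ} (hf : ContDiff ℝ 2 f) :
    Differentiable ℝ (gradient f) := by
  have hfderiv : Differentiable ℝ (fderiv ℝ f) :=
    (hf.fderiv_right (m := 1) le_rfl).differentiable one_ne_zero
  -- over `ℝ` the conjugate-linear Riesz map is linear
  have hriesz : Differentiable ℝ (toDual ℝ F).symm :=
    ((toDual ℝ F).symm.toContinuousLinearEquiv.toContinuousLinearMap :
      StrongDual ℝ F →L[ℝ] F).differentiable
  exact hriesz.comp hfderiv

theorem EuclideanSpace.gradient_apply {ι : Type*} [Fintype ι] [DecidableEq ι]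
    (f : EuclideanSpace ℝ ι → ℝ) (x : EuclideanSpace ℝ ι) (j : ι) :
    gradient f x j = fderiv ℝ f x (EuclideanSpace.single j 1) := by
  rw [← inner_gradient_left, EuclideanSpace.inner_single_right]
  simp

theorem hasFDerivAt_sum_coord_smul {ι F : Type*} [Fintype ι] [NormedAddCommGroup F]
    [NormedSpace ℝ F] {u : ι → EuclideanSpace ℝ ι → F} (hu : ∀ j, DifferentiableAt ℝ (u j) 0) :
    HasFDerivAt (fun δ => ∑ j, δ j • u j δ)
      (∑ j, (EuclideanSpace.proj j : EuclideanSpace ℝ ι →L[ℝ] ℝ).smulRight (u j 0)) 0 := by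
  refine HasFDerivAt.fun_sum fun j _ => ?_
  simpa using (EuclideanSpace.proj j).hasFDerivAt.fun_smul (hu j).hasFDerivAt

theorem fderiv_apply_single_add_eq_zero_of_stationary {ι E F : Type*} [Fintype ι]
    [DecidableEq ι] [NormedAddCommGroup E] [NormedSpace ℝ E] [NormedAddCommGroup F]
    [NormedSpace ℝ F] {θ : EuclideanSpace ℝ ι → E} {g : E → F} {h : ι → E → F} {G : E →L[ℝ] F}
    (hθ : DifferentiableAt ℝ θ 0) (hg : HasFDerivAt g G (θ 0))
    (hh : ∀ j, DifferentiableAt ℝ (h j) (θ 0))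
    (hstat : ∀ᶠ δ in 𝓝 0, g (θ δ) + ∑ j, δ j • h j (θ δ) = 0) (j : ι) :
    G (fderiv ℝ θ 0 (EuclideanSpace.single j 1)) + h j (θ 0) = 0 := by
  have hderiv := (hg.comp 0 hθ.hasFDerivAt).add
    (hasFDerivAt_sum_coord_smul fun j => (hh j).comp 0 hθ)
  have hzero := (hderiv.congr_of_eventuallyEq (hstat.mono fun _ h => h.symm)).unique
    (hasFDerivAt_const 0 0)
  simpa using congrArg (· (EuclideanSpace.single j 1)) hzero

theorem influence_loss_of_subset_general
    (N n m : ℕ)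
    (ℓi : Fin n → EuclideanSpace ℝ (Fin N) → ℝ)
    (ℓhat : Fin m → EuclideanSpace ℝ (Fin N) → ℝ)
    (hℓi : ∀ i, ContDiff ℝ 2 (ℓi i)) (hℓhat : ∀ j, ContDiff ℝ 2 (ℓhat j))
    (R : EuclideanSpace ℝ (Fin N) → ℝ)
    (hR : R = fun θ => (1 / n : ℝ) * ∑ i, ℓi i θ)
    (θ : EuclideanSpace ℝ (Fin m) → EuclideanSpace ℝ (Fin N))
    (hθ : DifferentiableAt ℝ θ 0)
    (hstat : ∀ᶠ δ in nhds (0 : EuclideanSpace ℝ (Fin m)),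
      gradient R (θ δ) + ∑ j, δ j • gradient (ℓhat j) (θ δ) = 0)
    (H : EuclideanSpace ℝ (Fin N) ≃L[ℝ] EuclideanSpace ℝ (Fin N))
    (hH : (H : EuclideanSpace ℝ (Fin N) →L[ℝ] EuclideanSpace ℝ (Fin N)) =
      fderiv ℝ (gradient R) (θ 0))
    (Ltest : EuclideanSpace ℝ (Fin N) → ℝ)
    (hLtest : DifferentiableAt ℝ Ltest (θ 0)) :
    ∀ j : Fin m,
      gradient (fun δ => Ltest (θ δ)) 0 j =
        ⟪gradient Ltest (θ 0), -(H.symm (gradient (ℓhat j) (θ 0)))⟫ := by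
  intro j
  have hRsmooth : ContDiff ℝ 2 R := hR ▸ contDiff_const.mul (ContDiff.sum fun i _ => hℓi i)
  have hHessian : HasFDerivAt (gradient R) (H : EuclideanSpace ℝ (Fin N) →L[ℝ] _) (θ 0) :=
    hH ▸ (hRsmooth.differentiable_gradient _).hasFDerivAt
  have hresponse : fderiv ℝ θ 0 (EuclideanSpace.single j 1) =
      -H.symm (gradient (ℓhat j) (θ 0)) := by
    rw [← map_neg, H.eq_symm_apply, eq_neg_iff_add_eq_zero]
    exact fderiv_apply_single_add_eq_zero_of_stationary hθ hHessian
      (fun j => (hℓhat j).differentiable_gradient _) hstat j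
  rw [EuclideanSpace.gradient_apply, fderiv_fun_comp _ hLtest hθ, ContinuousLinearMap.comp_apply,
    ← inner_gradient_left, hresponse]

/-- **Multi-dimensional influence function of the test loss.**
If `θ δ` is a stationary point of the δ-reweighted objective `R + ∑ⱼ δⱼ • ℓhatⱼ` for
all `δ` near `0` in `ℝᵐ`, `θ` is differentiable at `0`, the Hessian `H = ∇²R(θ 0)` is
invertible, and the test loss `Ltest` is differentiable at `θhat = θ 0`, then the
`j`-th component of the gradient at `0` of `δ ↦ Ltest(θ δ)` equals
`⟪∇Ltest(θhat), -H⁻¹ ∇ℓhatⱼ(θhat)⟫` for every `j`. -/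
theorem influence_loss_of_subset
    (N n m : ℕ) (hN : 0 < N) (hn : 0 < n) (hm : 0 < m)
    (ℓi : Fin n → EuclideanSpace ℝ (Fin N) → ℝ)
    (ℓhat : Fin m → EuclideanSpace ℝ (Fin N) → ℝ)
    (hℓi : ∀ i, ContDiff ℝ 2 (ℓi i)) (hℓhat : ∀ j, ContDiff ℝ 2 (ℓhat j))
    (R : EuclideanSpace ℝ (Fin N) → ℝ)
    (hR : R = fun θ => (1 / n : ℝ) * ∑ i, ℓi i θ)
    (θ : EuclideanSpace ℝ (Fin m) → EuclideanSpace ℝ (Fin N))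
    (hθ : DifferentiableAt ℝ θ 0)
    (hstat : ∀ᶠ δ in nhds (0 : EuclideanSpace ℝ (Fin m)),
      gradient R (θ δ) + ∑ j, δ j • gradient (ℓhat j) (θ δ) = 0)
    (H : EuclideanSpace ℝ (Fin N) ≃L[ℝ] EuclideanSpace ℝ (Fin N))
    (hH : (H : EuclideanSpace ℝ (Fin N) →L[ℝ] EuclideanSpace ℝ (Fin N)) =
      fderiv ℝ (gradient R) (θ 0))
    (Ltest : EuclideanSpace ℝ (Fin N) → ℝ)
    (hLtest : DifferentiableAt ℝ Ltest (θ 0)) :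
    ∀ j : Fin m,
      gradient (fun δ => Ltest (θ δ)) 0 j =
        ⟪gradient Ltest (θ 0), -(H.symm (gradient (ℓhat j) (θ 0)))⟫ :=
  influence_loss_of_subset_general N n m ℓi ℓhat hℓi hℓhat R hR θ hθ hstat H hH Ltest hLtest
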